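/- Let S = {x ∈ ℝⁿ : ‖x‖₀ ≤ s} with s < n and x* ∈ S. Then the Mordukhovich limiting normal cone to S at x* equals {v ∈ ℝⁿ : vᵢ = 0 for all i ∈ supp(x*), and ‖v‖₀ ≤ n − s}. -/

import Mathlib

open Filter Topology Metric Set
open scoped Classical

noncomputable section

abbrev E (n : ℕ) := EuclideanSpace ℝ (Fin n)

/-- Bouligand tangent cone. -/
def bouligand {n : ℕ} (S : Set (E n)) (x : E n) : Set (E n) :=
  {d | ∃ t : ℕ → ℝ, ∃ dk : ℕ → E n,
    (∀ k, 0 < t k) ∧ Tendsto t atTop (𝓝 0) ∧ Tendsto dk atTop (𝓝 d) ∧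
    ∀ k, x + t k • dk k ∈ S}

/-- Fréchet (regular) normal cone. -/
def frechetNormal {n : ℕ} (S : Set (E n)) (x : E n) : Set (E n) :=
  {v | ∀ ε > (0 : ℝ), ∃ δ > (0 : ℝ), ∀ y ∈ S, ‖y - x‖ < δ →
    (inner ℝ v (y - x) : ℝ) ≤ ε * ‖y - x‖}

/-- Mordukhovich (limiting) normal cone. -/
def limitingNormal {n : ℕ} (S : Set (E n)) (x : E n) : Set (E n) :=
  {v | ∃ xk : ℕ → E n, ∃ vk : ℕ → E n,
    (∀ k, xk k ∈ S) ∧ Tendsto xk atTop (𝓝 x) ∧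
    (∀ k, vk k ∈ frechetNormal S (xk k)) ∧ Tendsto vk atTop (𝓝 v)}

/-- Directional limiting normal cone. -/
def dirLimitingNormal {n : ℕ} (S : Set (E n)) (x d : E n) : Set (E n) :=
  {v | ∃ t : ℕ → ℝ, ∃ dk : ℕ → E n, ∃ vk : ℕ → E n,
    (∀ k, 0 < t k) ∧ Tendsto t atTop (𝓝 0) ∧ Tendsto dk atTop (𝓝 d) ∧
    Tendsto vk atTop (𝓝 v) ∧ ∀ k, vk k ∈ frechetNormal S (x + t k • dk k)}

/-- Support of a vector. -/
def supp {n : ℕ} (x : E n) : Finset (Fin n) := Finset.univ.filter (fun i => x i ≠ 0)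

/-- The ℓ₀ "norm": number of nonzero components. -/
def l0 {n : ℕ} (x : E n) : ℕ := (supp x).card

/-- The sparsity set {x : ‖x‖₀ ≤ s}. -/
def sparseSet (n s : ℕ) : Set (E n) := {x | l0 x ≤ s}

/-- Coordinate subspace ℝ_I of vectors supported on I. -/
def coordSub {n : ℕ} (I : Finset (Fin n)) : Set (E n) := {x | ∀ i ∉ I, x i = 0}

/-! A Fréchet normal to `S = {‖x‖₀ ≤ s}` at `y` is nonpositive on tangent directions, and `S`
contains the whole line through `y` along the `i`-th axis when `i ∈ supp y`, or for every `i` when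
`‖y‖₀ < s`. Hence Fréchet normals vanish on `supp y`, vanish entirely when `‖y‖₀ < s`, and so have
at most `n - s` nonzero entries; both properties survive limits. Conversely, near a point with
exactly `s` nonzero entries `S` coincides with the coordinate subspace on its support, so every
vector vanishing there is a Fréchet normal. For `v` in the right-hand side, extend `supp x` to an
`s`-element set `I` disjoint from `supp v` and approach `x` by points with support exactly `I`. -/

section FrechetTangent

variable {n : ℕ} {S : Set (E n)} {x v d : E n}

theorem inner_nonpos_of_mem_frechetNormal_of_mem_bouligand
    (hv : v ∈ frechetNormal S x) (hd : d ∈ bouligand S x) : inner ℝ v d ≤ 0 := by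
  obtain ⟨t, dk, ht, ht0, hdk, hS⟩ := hd
  have hbound : ∀ ε > (0 : ℝ), inner ℝ v d ≤ ε * ‖d‖ := by
    intro ε hε
    obtain ⟨δ, hδ, H⟩ := hv ε hε
    have hstep : Tendsto (fun k => t k • dk k) atTop (𝓝 0) := by
      simpa using ht0.smul hdk
    have hev : ∀ᶠ k in atTop, inner ℝ v (dk k) ≤ ε * ‖dk k‖ := by
      filter_upwards [hstep.eventually (ball_mem_nhds 0 hδ)] with k hk
      have h := H _ (hS k) (by simpa using hk)
      rw [add_sub_cancel_left, real_inner_smul_right, norm_smul, Real.norm_of_nonneg (ht k).le,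
        mul_left_comm] at h
      exact le_of_mul_le_mul_left h (ht k)
    exact le_of_tendsto_of_tendsto ((continuous_const.inner continuous_id).tendsto d |>.comp hdk)
      (tendsto_const_nhds.mul hdk.norm) hev
  have hlim : Tendsto (fun ε : ℝ => ε * ‖d‖) (𝓝[>] 0) (𝓝 0) := by
    simpa using ((tendsto_id (x := 𝓝 (0 : ℝ))).mul_const ‖d‖).mono_left nhdsWithin_le_nhds
  exact ge_of_tendsto hlim (eventually_nhdsWithin_of_forall hbound)

theorem mem_bouligand_of_forall_add_smul_mem (h : ∀ t : ℝ, 0 < t → x + t • d ∈ S) :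
    d ∈ bouligand S x :=
  ⟨fun k => 1 / (k + 1), fun _ => d, fun k => by positivity,
    tendsto_one_div_add_atTop_nhds_zero_nat, tendsto_const_nhds, fun k => h _ (by positivity)⟩

theorem inner_eq_zero_of_mem_frechetNormal (hv : v ∈ frechetNormal S x)
    (hline : ∀ c : ℝ, x + c • d ∈ S) : inner ℝ v d = 0 := by
  have hneg := inner_nonpos_of_mem_frechetNormal_of_mem_bouligand hv
    (mem_bouligand_of_forall_add_smul_mem (d := -d) fun t _ => by simpa using hline (-t))
  rw [inner_neg_right, neg_nonpos] at hneg
  exact le_antisymm (inner_nonpos_of_mem_frechetNormal_of_mem_bouligand hv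
    (mem_bouligand_of_forall_add_smul_mem fun t _ => hline t)) hneg

end FrechetTangent

section Support

variable {n : ℕ}

theorem mem_supp {x : E n} {i : Fin n} : i ∈ supp x ↔ x i ≠ 0 := by
  simp [supp]

theorem supp_add_smul_single_subset (x : E n) (i : Fin n) (c : ℝ) :
    supp (x + c • EuclideanSpace.single i 1) ⊆ insert i (supp x) := by
  intro j hj
  rw [Finset.mem_insert, mem_supp]
  by_contra! h
  simp [mem_supp, h.1, h.2] at hj

theorem supp_add_smul_of_disjoint {x u : E n} (h : Disjoint (supp x) (supp u)) {t : ℝ}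
    (ht : t ≠ 0) : supp (x + t • u) = supp x ∪ supp u := by
  ext i
  by_cases hx : x i = 0 <;> by_cases hu : u i = 0
  · simp [mem_supp, hx, hu]
  · simp [mem_supp, hx, hu, ht]
  · simp [mem_supp, hx, hu]
  · exact absurd h (Finset.not_disjoint_iff.mpr ⟨i, mem_supp.mpr hx, mem_supp.mpr hu⟩)

theorem eventually_supp_subset {α : Type*} {l : Filter α} {f : α → E n} {x : E n}
    (h : Tendsto f l (𝓝 x)) : ∀ᶠ a in l, supp x ⊆ supp (f a) := by
  have hcoord : ∀ i ∈ supp x, ∀ᶠ a in l, f a i ≠ 0 := fun i hi =>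
    (((PiLp.continuous_apply 2 _ i).tendsto x).comp h).eventually_ne (mem_supp.mp hi)
  filter_upwards [(Filter.eventually_all_finset _).2 hcoord] with a ha i hi
  exact mem_supp.mpr (ha i hi)

theorem inner_eq_zero_of_mem_coordSub {I : Finset (Fin n)} {u v : E n} (hu : u ∈ coordSub I)
    (hv : ∀ i ∈ I, v i = 0) : inner ℝ v u = 0 := by
  rw [PiLp.inner_apply]
  refine Finset.sum_eq_zero fun i _ => ?_
  by_cases hi : i ∈ I
  · simp [hv i hi]
  · simp [hu i hi]

theorem exists_seq_tendsto_supp_eq {x : E n} {I : Finset (Fin n)} (hxI : supp x ⊆ I) :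
    ∃ xk : ℕ → E n, Tendsto xk atTop (𝓝 x) ∧ ∀ k, supp (xk k) = I := by
  set u : E n := WithLp.toLp 2 fun i => if i ∈ I \ supp x then 1 else 0
  have hu : supp u = I \ supp x := by
    ext i
    simp only [mem_supp, u]
    split_ifs with hi <;> simp [hi]
  refine ⟨fun k => x + (1 / (k + 1) : ℝ) • u, ?_, fun k => ?_⟩
  · simpa using (tendsto_const_nhds (x := x)).add ((tendsto_one_div_add_atTop_nhds_zero_nat (𝕜 := ℝ)).smul_const u)
  · rw [supp_add_smul_of_disjoint (hu ▸ Finset.disjoint_sdiff) (by positivity), hu,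
      Finset.union_sdiff_of_subset hxI]

end Support

theorem mem_frechetNormal_of_eventually_mem_coordSub {n : ℕ} {S : Set (E n)} {I : Finset (Fin n)}
    {z v : E n} (hS : ∀ᶠ y in 𝓝 z, y ∈ S → y ∈ coordSub I) (hz : z ∈ coordSub I)
    (hv : ∀ i ∈ I, v i = 0) : v ∈ frechetNormal S z := by
  intro ε hε
  obtain ⟨δ, hδ, H⟩ := Metric.eventually_nhds_iff.mp hS
  refine ⟨δ, hδ, fun y hy hyz => ?_⟩
  have hsub : y - z ∈ coordSub I := fun i hi => by
    simp [H (by rwa [dist_eq_norm]) hy i hi, hz i hi]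
  rw [inner_eq_zero_of_mem_coordSub hsub hv]
  positivity

section SparseSet

variable {n s : ℕ}

theorem frechetNormal_sparseSet_apply_eq_zero {y w : E n} (hy : y ∈ sparseSet n s)
    (hw : w ∈ frechetNormal (sparseSet n s) y) {i : Fin n} (hi : i ∈ supp y ∨ l0 y < s) :
    w i = 0 := by
  have hline : ∀ c : ℝ, y + c • EuclideanSpace.single i 1 ∈ sparseSet n s := by
    intro c
    refine (Finset.card_le_card (supp_add_smul_single_subset y i c)).trans ?_
    rcases hi with hi | hi
    · rw [Finset.insert_eq_of_mem hi]
      exact hy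
    · exact (Finset.card_insert_le _ _).trans hi
  simpa [EuclideanSpace.inner_single_right] using inner_eq_zero_of_mem_frechetNormal hw hline

theorem l0_le_of_mem_frechetNormal_sparseSet {y w : E n} (hy : y ∈ sparseSet n s)
    (hw : w ∈ frechetNormal (sparseSet n s) y) : l0 w ≤ n - s := by
  rcases (show l0 y ≤ s from hy).lt_or_eq with hlt | heq
  · have hw0 : supp w = ∅ := Finset.eq_empty_of_forall_notMem fun i hi =>
      mem_supp.mp hi (frechetNormal_sparseSet_apply_eq_zero hy hw (Or.inr hlt))
    simp [l0, hw0]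
  · have hsub : supp w ⊆ (supp y)ᶜ := fun i hi => Finset.mem_compl.mpr fun hiy =>
      mem_supp.mp hi (frechetNormal_sparseSet_apply_eq_zero hy hw (Or.inl hiy))
    calc l0 w ≤ (supp y)ᶜ.card := Finset.card_le_card hsub
      _ = n - s := by rw [Finset.card_compl, Fintype.card_fin, ← heq, l0]

theorem eventually_mem_coordSub_of_l0_eq {z : E n} (hz : l0 z = s) :
    ∀ᶠ y in 𝓝 z, y ∈ sparseSet n s → y ∈ coordSub (supp z) := by
  filter_upwards [eventually_supp_subset tendsto_id] with y hzy hy i hi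
  have hyz : supp y = supp z := (Finset.eq_of_subset_of_card_le hzy (hy.trans hz.ge)).symm
  by_contra h
  exact hi (hyz ▸ mem_supp.mpr h)

theorem limitingNormal_sparseSet_subset {x : E n} :
    limitingNormal (sparseSet n s) x ⊆ {v | (∀ i ∈ supp x, v i = 0) ∧ l0 v ≤ n - s} := by
  rintro v ⟨xk, vk, hxkS, hxk, hvk, hvkv⟩
  refine ⟨fun i hi => ?_, ?_⟩
  · refine (isClosed_eq (PiLp.continuous_apply 2 _ i) continuous_const).mem_of_tendsto hvkv ?_
    filter_upwards [eventually_supp_subset hxk] with k hk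
    exact frechetNormal_sparseSet_apply_eq_zero (hxkS k) (hvk k) (Or.inl (hk hi))
  · obtain ⟨k, hk⟩ := (eventually_supp_subset hvkv).exists
    exact (Finset.card_le_card hk).trans (l0_le_of_mem_frechetNormal_sparseSet (hxkS k) (hvk k))

theorem subset_limitingNormal_sparseSet (hs : s ≤ n) {x : E n} (hx : x ∈ sparseSet n s) :
    {v | (∀ i ∈ supp x, v i = 0) ∧ l0 v ≤ n - s} ⊆ limitingNormal (sparseSet n s) x := by
  rintro v ⟨hvx, hv⟩
  have hxv : supp x ⊆ (supp v)ᶜ := fun i hi =>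
    Finset.mem_compl.mpr fun hiv => mem_supp.mp hiv (hvx i hi)
  have hcard : s ≤ (supp v)ᶜ.card := by
    rw [Finset.card_compl, Fintype.card_fin]
    unfold l0 at hv
    omega
  obtain ⟨I, hxI, hIv, hIs⟩ := Finset.exists_subsuperset_card_eq hxv hx hcard
  obtain ⟨xk, hxk, hsupp⟩ := exists_seq_tendsto_supp_eq hxI
  have hxkI : ∀ k, l0 (xk k) = s := fun k => by rw [l0, hsupp k, hIs]
  have hvI : ∀ i ∈ I, v i = 0 := fun i hi => by simpa [mem_supp] using hIv hi
  refine ⟨xk, fun _ => v, fun k => (hxkI k).le, hxk, fun k => ?_, tendsto_const_nhds⟩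
  refine mem_frechetNormal_of_eventually_mem_coordSub (I := I) ?_ ?_ hvI
  · simpa only [hsupp k] using eventually_mem_coordSub_of_l0_eq (hxkI k)
  · intro i hi
    by_contra h
    exact hi (hsupp k ▸ mem_supp.mpr h)

end SparseSet

theorem stmt13 {n s : ℕ} (hs : s < n) (x : E n) (hx : x ∈ sparseSet n s) :
    limitingNormal (sparseSet n s) x
      = {v : E n | (∀ i ∈ supp x, v i = 0) ∧ l0 v ≤ n - s} :=
  limitingNormal_sparseSet_subset.antisymm (subset_limitingNormal_sparseSet hs.le hx)
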